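/- arXiv:1307.4933 — 2 statements merged into one kernel-verified Lean document; each statement's English description precedes it below -/
import Mathlib

section
/- Let k ≥ 2 and let d be a chord diagram with exactly 2k chords containing a leaf, i.e., a chord that intersects exactly one other chord of d. Then R_k(d) = 0. -/
open Finset
open scoped Classical

/-- The cyclic successor of an element of `Fin m`. -/
def cyclicSucc {m : ℕ} (a : Fin m) : Fin m :=
  ⟨((a : ℕ) + 1) % m, Nat.mod_lt _ a.pos⟩

/-- The cyclic predecessor of an element of `Fin m`. -/
def cyclicPred {m : ℕ} (a : Fin m) : Fin m :=
  ⟨((a : ℕ) + (m - 1)) % m, Nat.mod_lt _ a.pos⟩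

/-- `f : Fin l → V` traces an `l`-cycle of `G`: it is injective and cyclically
consecutive vertices are adjacent. -/
def IsCycleMap {V : Type} (G : SimpleGraph V) (l : ℕ) (f : Fin l → V) : Prop :=
  Function.Injective f ∧ ∀ i : Fin l, G.Adj (f i) (f (cyclicSucc i))

/-- The number `E_l(G)` of `l`-cycles of `G`, counted up to rotation and reflection
(each such cycle is traced by exactly `2 * l` maps `Fin l → V`). -/
noncomputable def cycleCount {V : Type} [Fintype V] (G : SimpleGraph V) (l : ℕ) : ℕ :=
  (Finset.univ.filter (fun f : Fin l → V => IsCycleMap G l f)).card / (2 * l)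

/-- `o` is an orientation of `G`: every edge gets exactly one direction. -/
def IsOrientation {V : Type} (G : SimpleGraph V) (o : V → V → Prop) : Prop :=
  ∀ ⦃x y : V⦄, G.Adj x y → (o x y ↔ ¬ o y x)

/-- The sign of a cycle map with respect to a direction relation `o`:
`+1` iff the number of edges agreeing with the traversal is even. -/
noncomputable def cycleSign {V : Type} {l : ℕ} (o : V → V → Prop) (f : Fin l → V) : ℤ :=
  (-1) ^ (Finset.univ.filter (fun i : Fin l => o (f i) (f (cyclicSucc i)))).card

/-- The sum of signs of all `l`-cycles of `G` (counted up to rotation and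
reflection) with respect to the direction relation `o`. -/
noncomputable def signedCycleSum {V : Type} [Fintype V] (G : SimpleGraph V)
    (o : V → V → Prop) (l : ℕ) : ℤ :=
  (∑ f ∈ Finset.univ.filter (fun f : Fin l → V => IsCycleMap G l f),
    cycleSign o f) / (2 * (l : ℤ))

/-- The graph `Γ'_AB`: toggle the adjacency between the vertices `A` and `B`. -/
def toggleEdge {V : Type} (G : SimpleGraph V) (A B : V) : SimpleGraph V where
  Adj x y := x ≠ y ∧ (G.Adj x y ↔ ¬((x = A ∧ y = B) ∨ (x = B ∧ y = A)))
  symm := by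
    refine ⟨?_⟩
    intro x y h
    obtain ⟨h1, h2⟩ := h
    refine ⟨h1.symm, ?_⟩
    rw [G.adj_comm]
    tauto
  loopless := ⟨fun x h => h.1 rfl⟩

/-- The graph `Γ̃_AB`: toggle the adjacency between `A` and every vertex
`C ∉ {A, B}` adjacent to `B` in `Γ`. -/
def tildeGraph {V : Type} (G : SimpleGraph V) (A B : V) : SimpleGraph V where
  Adj x y := x ≠ y ∧
    (G.Adj x y ↔ ¬((x = A ∧ y ≠ B ∧ G.Adj y B) ∨ (y = A ∧ x ≠ B ∧ G.Adj x B)))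
  symm := by
    refine ⟨?_⟩
    intro x y h
    obtain ⟨h1, h2⟩ := h
    refine ⟨h1.symm, ?_⟩
    rw [G.adj_comm]
    tauto
  loopless := ⟨fun x h => h.1 rfl⟩

/-- A chord diagram of order `n`: a partition of the `2 * n` cyclically ordered
points `0, 1, …, 2n - 1` into `n` two-element blocks (chords), here recorded by
the function assigning to each point its chord. -/
structure ChordDiagram (n : ℕ) where
  chord : Fin (2 * n) → Fin n
  fiber_two : ∀ i : Fin n, (Finset.univ.filter (fun x => chord x = i)).card = 2

namespace ChordDiagram

variable {n : ℕ}

/-- The pair of endpoints of the chord `i`. -/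
def endpoints (d : ChordDiagram n) (i : Fin n) : Finset (Fin (2 * n)) :=
  Finset.univ.filter (fun x => d.chord x = i)

lemma endpoints_nonempty (d : ChordDiagram n) (i : Fin n) : (d.endpoints i).Nonempty := by
  rw [← Finset.card_pos, endpoints, d.fiber_two]
  norm_num

/-- The smaller endpoint of the chord `i`. -/
def lo (d : ChordDiagram n) (i : Fin n) : Fin (2 * n) :=
  (d.endpoints i).min' (d.endpoints_nonempty i)

/-- The larger endpoint of the chord `i`. -/
def hi (d : ChordDiagram n) (i : Fin n) : Fin (2 * n) :=
  (d.endpoints i).max' (d.endpoints_nonempty i)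

/-- Chords `i` and `j` cross: exactly one endpoint of `j` lies strictly between
the two endpoints of `i`. -/
def Crosses (d : ChordDiagram n) (i j : Fin n) : Prop :=
  Xor' (d.lo i < d.lo j ∧ d.lo j < d.hi i) (d.lo i < d.hi j ∧ d.hi j < d.hi i)

/-- The intersection graph `γ(d)` of the chord diagram `d`. -/
def interGraph (d : ChordDiagram n) : SimpleGraph (Fin n) where
  Adj i j := i ≠ j ∧ (d.Crosses i j ∨ d.Crosses j i)
  symm := ⟨fun i j h => ⟨h.1.symm, h.2.symm⟩⟩
  loopless := ⟨fun i h => h.1 rfl⟩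

lemma chord_lo (d : ChordDiagram n) (i : Fin n) : d.chord (d.lo i) = i := by
  have h := (d.endpoints i).min'_mem (d.endpoints_nonempty i)
  exact (Finset.mem_filter.mp h).2

/-- An orientation of a chord diagram: a choice of a beginning point for each
chord (the other endpoint being its end). -/
def Orientation (d : ChordDiagram n) : Type :=
  { b : Fin n → Fin (2 * n) // ∀ i, d.chord (b i) = i }

/-- The end of the chord `i`, i.e. its endpoint other than the beginning. -/
def endOf (d : ChordDiagram n) (o : d.Orientation) (i : Fin n) : Fin (2 * n) :=
  if o.1 i = d.lo i then d.hi i else d.lo i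

/-- The point `z` lies on the arc going in the positive direction from `a` to `b`. -/
def InArc {m : ℕ} (a b z : Fin m) : Prop :=
  if a < b then a < z ∧ z < b else a < z ∨ z < b

/-- The direction induced by an orientation of the chords on the edges of the
intersection graph: the edge between `i` and `j` is directed from `i` to `j`
iff the beginning of `j` lies on the arc going in the positive direction from
the beginning of `i` to the end of `i`. -/
def dir (d : ChordDiagram n) (o : d.Orientation) (i j : Fin n) : Prop :=
  InArc (o.1 i) (d.endOf o i) (o.1 j)

/-- The canonical orientation: every chord begins at its smaller endpoint. -/
def canonical (d : ChordDiagram n) : d.Orientation :=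
  ⟨d.lo, d.chord_lo⟩

end ChordDiagram

/-- The weight system `R_k`: the sum of the signs of the `2k`-cycles of the
directed intersection graph (for the canonical orientation of the chords). -/
noncomputable def Rk (k : ℕ) {n : ℕ} (d : ChordDiagram n) : ℤ :=
  signedCycleSum d.interGraph (d.dir d.canonical) (2 * k)

/-- When the point at position `p` is moved to position `q` (keeping the relative
order of all the other points), `moveFun p q r` is the old position of the point
occupying the position `r` after the move. -/
def moveFun {m : ℕ} (p q : Fin m) (r : Fin m) : Fin m :=
  if r = q then p
  else if h : (p : ℕ) ≤ (r : ℕ) ∧ (r : ℕ) < (q : ℕ) then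
    ⟨(r : ℕ) + 1, by have := q.isLt; omega⟩
  else if h' : (q : ℕ) < (r : ℕ) ∧ (r : ℕ) ≤ (p : ℕ) then
    ⟨(r : ℕ) - 1, by have := r.isLt; omega⟩
  else r

/-- The invariant `w_C`: `1` if the adjacency matrix of the graph over `ZMod 2`
is nondegenerate, `0` otherwise. -/
noncomputable def wC {V : Type} [Fintype V] (G : SimpleGraph V) : ℤ :=
  if (G.adjMatrix (ZMod 2)).det ≠ 0 then 1 else 0

/-- All set partitions of `Fin n` into nonempty blocks. -/
noncomputable def finPartitions (n : ℕ) : Finset (Finset (Finset (Fin n))) :=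
  Finset.univ.filter (fun P =>
    (∀ s ∈ P, s.Nonempty) ∧ ∀ x : Fin n, ∃! s, s ∈ P ∧ x ∈ s)

/-- A `4`-invariant of finite simple graphs: an integer-valued, isomorphism
invariant function satisfying the `4`-term relation for graphs. -/
structure FourInvariant where
  val : ∀ n : ℕ, SimpleGraph (Fin n) → ℤ
  iso_invariant : ∀ {n m : ℕ} (G : SimpleGraph (Fin n)) (H : SimpleGraph (Fin m)),
    Nonempty (G ≃g H) → val n G = val m H
  four_term : ∀ (n : ℕ) (G : SimpleGraph (Fin n)) (A B : Fin n), A ≠ B →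
    val n G - val n (toggleEdge G A B) =
      val n (tildeGraph G A B) - val n (toggleEdge (tildeGraph G A B) A B)

/-- The `5`-wheel: a `5`-cycle on the vertices `0, …, 4` together with the hub `5`
adjacent to all five cycle vertices. -/
def wheel5 : SimpleGraph (Fin 6) :=
  SimpleGraph.fromRel (fun x y =>
    ((x : ℕ) = 5 ∧ (y : ℕ) < 5) ∨
    ((x : ℕ) < 5 ∧ (y : ℕ) < 5 ∧ (y : ℕ) = ((x : ℕ) + 1) % 5))

/-- The triangular prism: two triangles `{0, 1, 2}` and `{3, 4, 5}` joined by the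
perfect matching `i — i + 3`. -/
def prism : SimpleGraph (Fin 6) :=
  SimpleGraph.fromRel (fun x y =>
    ((x : ℕ) < 3 ∧ (y : ℕ) < 3 ∧ x ≠ y) ∨
    (3 ≤ (x : ℕ) ∧ 3 ≤ (y : ℕ) ∧ x ≠ y) ∨
    ((y : ℕ) = (x : ℕ) + 3))

/-!
A `2k`-cycle in the intersection graph of a diagram with `2k` chords passes through every chord,
in particular through the leaf, which would then need two distinct neighbours on the cycle
(here `2k ≥ 3` matters). So there are no `2k`-cycles at all, and the signed count `R_k(d)` vanishes.
-/

lemma cyclicSucc_cyclicPred {m : ℕ} (a : Fin m) : cyclicSucc (cyclicPred a) = a := by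
  have hm := a.pos
  ext
  simp only [cyclicSucc, cyclicPred, Nat.mod_add_mod]
  rw [Nat.add_assoc, Nat.sub_add_cancel hm, Nat.add_mod_right, Nat.mod_eq_of_lt a.isLt]

lemma cyclicSucc_ne_cyclicPred {m : ℕ} (hm : 3 ≤ m) (a : Fin m) :
    cyclicSucc a ≠ cyclicPred a := by
  intro h
  have hmod : (a + 1 : ℕ) ≡ a + (m - 1) [MOD m] := congrArg Fin.val h
  have hshift : a + 2 ≡ a + 0 [MOD m] := by
    have := hmod.add_right 1
    rw [Nat.add_assoc, Nat.add_assoc, Nat.sub_add_cancel (by omega)] at this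
    exact this.trans (by simp [Nat.ModEq])
  have := Nat.le_of_dvd two_pos ((Nat.modEq_zero_iff_dvd).1 (Nat.ModEq.add_left_cancel' a hshift))
  omega

section CycleMaps

variable {V : Type} {G : SimpleGraph V} {l : ℕ} {f : Fin l → V}

lemma IsCycleMap.not_existsUnique_adj (hf : IsCycleMap G l f) (hl : 3 ≤ l) (p : Fin l) :
    ¬ ∃! w, G.Adj (f p) w := by
  rintro ⟨w, -, huniq⟩
  have hnext : G.Adj (f p) (f (cyclicSucc p)) := hf.2 p
  have hprev : G.Adj (f p) (f (cyclicPred p)) := by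
    simpa only [cyclicSucc_cyclicPred] using (hf.2 (cyclicPred p)).symm
  exact cyclicSucc_ne_cyclicPred hl p (hf.1 ((huniq _ hnext).trans (huniq _ hprev).symm))

lemma signedCycleSum_card_eq_zero_of_existsUnique_adj [Fintype V] (o : V → V → Prop)
    (hV : 3 ≤ Fintype.card V) {v : V} (hv : ∃! w, G.Adj v w) :
    signedCycleSum G o (Fintype.card V) = 0 := by
  suffices hempty : univ.filter (IsCycleMap G (Fintype.card V)) = ∅ by
    rw [signedCycleSum, hempty, sum_empty, Int.zero_ediv]
  refine filter_eq_empty_iff.2 fun f _ hf => ?_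
  have hsurj : Function.Surjective f :=
    (Fintype.bijective_iff_injective_and_card f).2 ⟨hf.1, Fintype.card_fin _⟩ |>.2
  obtain ⟨p, rfl⟩ := hsurj v
  exact hf.not_existsUnique_adj hV p hv

end CycleMaps

theorem Rk_eq_zero_of_leaf (k : ℕ) (hk : 2 ≤ k) (d : ChordDiagram (2 * k))
    (i : Fin (2 * k)) (hleaf : ∃! j : Fin (2 * k), d.interGraph.Adj i j) :
    Rk k d = 0 := by
  have h := signedCycleSum_card_eq_zero_of_existsUnique_adj (d.dir d.canonical)
    (by rw [Fintype.card_fin]; omega) hleaf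
  rwa [Fintype.card_fin] at h
end

section
/- Let f be an integer-valued function on simple graphs with exactly 6 vertices, invariant under graph isomorphism, satisfying the 4-term relation f(Γ) − f(Γ′_AB) = f(Γ̃_AB) − f(Γ̃′_AB) for every 6-vertex simple graph Γ and all distinct vertices A, B, and such that f(γ(d)) = R_3(d) for every chord diagram d of order 6. Then f(W_5) = −3, where W_5 is the 5-wheel (a 5-cycle together with one additional vertex adjacent to all five cycle vertices), and f(P) = −1, where P is the triangular prism (two disjoint triangles joined by a perfect matching, i.e., the Cartesian product of K_3 and K_2). -/
open Finset
open scoped Classical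

/-!
The wheel and the prism each occur in a 4-term relation whose other three graphs are
intersection graphs of chord diagrams of order 6: for `Γ = γ(wheel₀)` and `(A, B) = (5, 3)` the
graph `Γ̃′_AB` is `W₅`, and for `Γ = γ(prism₀)` and `(A, B) = (5, 1)` the graph `Γ̃_AB` is `P`.
The relation then expresses `f(W₅)` and `f(P)` through values of `R₃`. A `6`-cycle on six
vertices is traced by a permutation, so these values are finite sums over `Equiv.Perm (Fin 6)`,
which the kernel evaluates.
-/

namespace ChordDiagram

instance {m : ℕ} (a b z : Fin m) : Decidable (InArc a b z) :=
  inferInstanceAs (Decidable (if a < b then a < z ∧ z < b else a < z ∨ z < b))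

variable {n : ℕ} (d : ChordDiagram n)

instance : DecidableRel d.Crosses := fun _ _ =>
  inferInstanceAs (Decidable ((_ ∧ ¬ _) ∨ (_ ∧ ¬ _)))

instance : DecidableRel d.interGraph.Adj := fun i j =>
  inferInstanceAs (Decidable (i ≠ j ∧ (d.Crosses i j ∨ d.Crosses j i)))

instance (o : d.Orientation) : DecidableRel (d.dir o) := fun _ _ =>
  inferInstanceAs (Decidable (InArc _ _ _))

end ChordDiagram

section Toggle

variable {V : Type} [DecidableEq V] (G : SimpleGraph V) [DecidableRel G.Adj] (A B : V)

instance : DecidableRel (toggleEdge G A B).Adj := fun x y =>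
  inferInstanceAs (Decidable (x ≠ y ∧ (G.Adj x y ↔ ¬((x = A ∧ y = B) ∨ (x = B ∧ y = A)))))

instance : DecidableRel (tildeGraph G A B).Adj := fun x y =>
  inferInstanceAs (Decidable (x ≠ y ∧
    (G.Adj x y ↔ ¬((x = A ∧ y ≠ B ∧ G.Adj y B) ∨ (y = A ∧ x ≠ B ∧ G.Adj x B)))))

end Toggle

instance : DecidableRel wheel5.Adj := inferInstanceAs (DecidableRel (SimpleGraph.fromRel _).Adj)

instance : DecidableRel prism.Adj := inferInstanceAs (DecidableRel (SimpleGraph.fromRel _).Adj)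

theorem signedCycleSum_eq_sum_perm {n : ℕ} (G : SimpleGraph (Fin n)) [DecidableRel G.Adj]
    (o : Fin n → Fin n → Prop) [DecidableRel o] :
    signedCycleSum G o n =
      (∑ σ : Equiv.Perm (Fin n) with ∀ i, G.Adj (σ i) (σ (cyclicSucc i)),
        (-1 : ℤ) ^ #{i | o (σ i) (σ (cyclicSucc i))}) / (2 * n) := by
  have hcycles : ({f | IsCycleMap G n f} : Finset (Fin n → Fin n)) =
      ({σ | ∀ i, G.Adj (σ i) (σ (cyclicSucc i))} : Finset (Equiv.Perm (Fin n))).map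
        ⟨_, DFunLike.coe_injective⟩ := by
    ext f
    simp only [mem_filter, mem_univ, true_and, mem_map, Function.Embedding.coeFn_mk]
    constructor
    · rintro ⟨hinj, hadj⟩
      exact ⟨Equiv.ofBijective f hinj.bijective_of_finite, hadj, rfl⟩
    · rintro ⟨σ, hσ, rfl⟩
      exact ⟨σ.injective, hσ⟩
  rw [signedCycleSum, hcycles, sum_map]
  simp only [cycleSign, Function.Embedding.coeFn_mk]

theorem Rk_three_eq_sum_perm (d : ChordDiagram 6) :
    Rk 3 d = (∑ σ : Equiv.Perm (Fin 6) with ∀ i, d.interGraph.Adj (σ i) (σ (cyclicSucc i)),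
      (-1 : ℤ) ^ #{i | d.dir d.canonical (σ i) (σ (cyclicSucc i))}) / 12 :=
  signedCycleSum_eq_sum_perm _ _

namespace ChordDiagram

/- A diagram is given by the word of chord labels read along the circle; the subscript is the
position of its intersection graph in the 4-term relation: `₀` for `Γ`, `₁` for `Γ′`, `₂` for
`Γ̃`, `₃` for `Γ̃′`. -/

def wheel₀ : ChordDiagram 6 := ⟨![5, 0, 1, 5, 4, 0, 3, 4, 2, 3, 1, 2], by decide⟩
def wheel₁ : ChordDiagram 6 := ⟨![2, 3, 1, 2, 0, 5, 1, 4, 0, 3, 4, 5], by decide⟩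
def wheel₂ : ChordDiagram 6 := ⟨![3, 2, 4, 3, 0, 5, 4, 1, 0, 2, 5, 1], by decide⟩
def prism₀ : ChordDiagram 6 := ⟨![2, 1, 0, 2, 4, 1, 3, 4, 5, 0, 3, 5], by decide⟩
def prism₁ : ChordDiagram 6 := ⟨![2, 0, 1, 2, 3, 5, 0, 4, 3, 1, 4, 5], by decide⟩
def prism₃ : ChordDiagram 6 := ⟨![2, 1, 0, 5, 2, 4, 1, 3, 5, 4, 0, 3], by decide⟩

theorem toggleEdge_interGraph_wheel₀ : toggleEdge wheel₀.interGraph 5 3 = wheel₁.interGraph := by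
  ext a b; revert a b; decide +kernel

theorem tildeGraph_interGraph_wheel₀ : tildeGraph wheel₀.interGraph 5 3 = wheel₂.interGraph := by
  ext a b; revert a b; decide +kernel

theorem toggleEdge_interGraph_wheel₂ : toggleEdge wheel₂.interGraph 5 3 = wheel5 := by
  ext a b; revert a b; decide +kernel

theorem toggleEdge_interGraph_prism₀ : toggleEdge prism₀.interGraph 5 1 = prism₁.interGraph := by
  ext a b; revert a b; decide +kernel

theorem tildeGraph_interGraph_prism₀ : tildeGraph prism₀.interGraph 5 1 = prism := by
  ext a b; revert a b; decide +kernel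

theorem toggleEdge_prism : toggleEdge prism 5 1 = prism₃.interGraph := by
  ext a b; revert a b; decide +kernel

theorem Rk_wheel₀ : Rk 3 wheel₀ = 1 := by rw [Rk_three_eq_sum_perm]; decide +kernel
theorem Rk_wheel₁ : Rk 3 wheel₁ = -1 := by rw [Rk_three_eq_sum_perm]; decide +kernel
theorem Rk_wheel₂ : Rk 3 wheel₂ = -1 := by rw [Rk_three_eq_sum_perm]; decide +kernel
theorem Rk_prism₀ : Rk 3 prism₀ = 1 := by rw [Rk_three_eq_sum_perm]; decide +kernel
theorem Rk_prism₁ : Rk 3 prism₁ = -1 := by rw [Rk_three_eq_sum_perm]; decide +kernel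
theorem Rk_prism₃ : Rk 3 prism₃ = -3 := by rw [Rk_three_eq_sum_perm]; decide +kernel

end ChordDiagram

open ChordDiagram in
theorem value_on_wheel_and_prism_general (f : SimpleGraph (Fin 6) → ℤ)
    (h4t : ∀ (G : SimpleGraph (Fin 6)) (A B : Fin 6), A ≠ B →
      f G - f (toggleEdge G A B) =
        f (tildeGraph G A B) - f (toggleEdge (tildeGraph G A B) A B))
    (hR : ∀ d : ChordDiagram 6, f d.interGraph = Rk 3 d) :
    f wheel5 = -3 ∧ f prism = -1 := by
  have hwheel := h4t wheel₀.interGraph 5 3 (by decide)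
  rw [toggleEdge_interGraph_wheel₀, tildeGraph_interGraph_wheel₀, toggleEdge_interGraph_wheel₂,
    hR, hR, hR, Rk_wheel₀, Rk_wheel₁, Rk_wheel₂] at hwheel
  have hprism := h4t prism₀.interGraph 5 1 (by decide)
  rw [toggleEdge_interGraph_prism₀, tildeGraph_interGraph_prism₀, toggleEdge_prism,
    hR, hR, hR, Rk_prism₀, Rk_prism₁, Rk_prism₃] at hprism
  constructor <;> linarith

theorem value_on_wheel_and_prism (f : SimpleGraph (Fin 6) → ℤ)
    (hiso : ∀ G H : SimpleGraph (Fin 6), Nonempty (G ≃g H) → f G = f H)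
    (h4t : ∀ (G : SimpleGraph (Fin 6)) (A B : Fin 6), A ≠ B →
      f G - f (toggleEdge G A B) =
        f (tildeGraph G A B) - f (toggleEdge (tildeGraph G A B) A B))
    (hR : ∀ d : ChordDiagram 6, f d.interGraph = Rk 3 d) :
    f wheel5 = -3 ∧ f prism = -1 :=
  value_on_wheel_and_prism_general f h4t hR
end
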